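/- Let λ ∈ ℝ and define F_λ : ℝ² → ℝ² by F_λ(x,y) = (x+y, y+λ). Then the quotient of the real vector space of smooth ℤ²-periodic functions ℝ² → ℝ by the linear subspace { g∘F_λ − g : g a smooth ℤ²-periodic function } is infinite dimensional. -/

import Mathlib

open intervalIntegral Real Complex MeasureTheory

noncomputable def EE (k : ℤ) (x : ℝ) : ℂ := Complex.exp (2 * Real.pi * Complex.I * k * x)

@[fun_prop]
lemma EE_cont (k : ℤ) : Continuous (EE k) := by
  unfold EE; fun_prop

lemma EE_norm (k : ℤ) (x : ℝ) : ‖EE k x‖ = 1 := by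
  unfold EE
  rw [show (2 * Real.pi * Complex.I * k * x : ℂ) = ((2 * Real.pi * k * x : ℝ) : ℂ) * Complex.I by
    push_cast; ring]
  exact Complex.norm_exp_ofReal_mul_I _

lemma EE_add (k : ℤ) (x y : ℝ) : EE k (x + y) = EE k x * EE k y := by
  unfold EE; rw [← Complex.exp_add]; push_cast; ring_nf

lemma EE_int (k m : ℤ) : EE k m = 1 := by
  unfold EE
  rw [show (2 * Real.pi * Complex.I * k * ((m:ℝ):ℂ) : ℂ) = ((k * m : ℤ) : ℂ) * (2 * Real.pi * Complex.I) by push_cast; ring]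
  exact Complex.exp_int_mul_two_pi_mul_I _

lemma EE_periodic (k : ℤ) : Function.Periodic (EE k) 1 := by
  intro x; rw [EE_add, show ((1:ℝ)) = ((1:ℤ):ℝ) by norm_num, EE_int, mul_one]

lemma EE_mul (k l : ℤ) (x : ℝ) : EE k x * EE l x = EE (k + l) x := by
  unfold EE; rw [← Complex.exp_add]; push_cast; ring_nf

lemma EE_integral (k : ℤ) (hk : k ≠ 0) : ∫ x in (0:ℝ)..1, EE k x = 0 := by
  have hc : (2 * Real.pi * Complex.I * k : ℂ) ≠ 0 := by
    simp [Complex.ext_iff, Real.pi_ne_zero, hk, mul_ne_zero]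
  have := integral_exp_mul_complex (a := 0) (b := 1) hc
  unfold EE
  simp only [mul_assoc] at this ⊢
  rw [this]
  norm_num
  rw [show (2 * (Real.pi * (Complex.I * k)) : ℂ) = k * (2 * Real.pi * Complex.I) by push_cast; ring]
  rw [Complex.exp_int_mul_two_pi_mul_I]
  simp

lemma EE_integral_zero : ∫ x in (0:ℝ)..1, EE 0 x = 1 := by
  unfold EE; simp

lemma shift_integral (f : ℝ → ℂ) (hf : Function.Periodic f 1) (t : ℝ) :
    ∫ x in (0:ℝ)..1, f (x + t) = ∫ x in (0:ℝ)..1, f x := by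
  have h := hf.intervalIntegral_add_eq t 0
  rw [intervalIntegral.integral_comp_add_right]
  simpa [add_comm, zero_add] using h

lemma cos_expand (t : ℝ) (r : ℤ) : ((Real.cos (2*Real.pi*r*t) : ℝ) : ℂ) = (EE r t + EE (-r) t)/2 := by
  rw [Complex.ofReal_cos]
  have : Complex.cos (((2*Real.pi*r*t : ℝ)):ℂ) =
      (Complex.exp (((2*Real.pi*r*t : ℝ):ℂ) * Complex.I) + Complex.exp (-((2*Real.pi*r*t : ℝ):ℂ) * Complex.I))/2 := rfl
  rw [this]
  unfold EE
  push_cast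
  ring_nf

lemma cos_coeff (r p : ℕ) :
    ∫ x in (0:ℝ)..1, ((Real.cos (2*Real.pi*(r+1)*x) : ℝ) : ℂ) * EE (-(p+1 : ℕ)) x
      = if r = p then 1/2 else 0 := by
  have hexp : ∀ x : ℝ, ((Real.cos (2*Real.pi*(r+1)*x) : ℝ) : ℂ) * EE (-(p+1 : ℕ)) x
      = (EE ((r+1 : ℕ) + -(p+1 : ℕ)) x + EE (-(r+1 : ℕ) + -(p+1 : ℕ)) x)/2 := by
    intro x
    have h1 : ((2:ℝ)*Real.pi*((r:ℝ)+1)*x) = 2*Real.pi*(((r+1 : ℕ) : ℤ) : ℝ)*x := by push_cast; ring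
    rw [h1, cos_expand, ← EE_mul, ← EE_mul]
    push_cast
    ring
  simp only [hexp]
  rw [intervalIntegral.integral_div]
  rw [intervalIntegral.integral_add ((EE_cont _).intervalIntegrable _ _) ((EE_cont _).intervalIntegrable _ _)]
  have h2 : (-(r+1 : ℕ) + -(p+1 : ℕ) : ℤ) ≠ 0 := by omega
  rw [EE_integral _ h2]
  by_cases h : r = p
  · subst h
    rw [show ((r+1 : ℕ) + -(r+1 : ℕ) : ℤ) = 0 by ring, EE_integral_zero]
    simp
  · rw [EE_integral _ (by omega), if_neg h]
    simp

lemma swap_box (F : ℝ → ℝ → ℂ) (hF : Continuous (Function.uncurry F)) :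
    ∫ y in (0:ℝ)..1, ∫ x in (0:ℝ)..1, F x y = ∫ x in (0:ℝ)..1, ∫ y in (0:ℝ)..1, F x y := by
  have hle : (0:ℝ) ≤ 1 := zero_le_one
  have hint : MeasureTheory.Integrable (Function.uncurry fun y x => F x y)
      ((volume.restrict (Set.Ioc (0:ℝ) 1)).prod (volume.restrict (Set.Ioc (0:ℝ) 1))) := by
    rw [MeasureTheory.Measure.prod_restrict]
    have h2 : MeasureTheory.IntegrableOn (Function.uncurry fun y x => F x y)
        ((Set.Icc (0:ℝ) 1) ×ˢ (Set.Icc (0:ℝ) 1)) :=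
      ((hF.comp continuous_swap).locallyIntegrable).integrableOn_isCompact (isCompact_Icc.prod isCompact_Icc)
    exact h2.mono_set (Set.prod_mono Set.Ioc_subset_Icc_self Set.Ioc_subset_Icc_self)
  have := MeasureTheory.integral_integral_swap hint
  simp only [intervalIntegral.integral_of_le hle]
  exact this

lemma EE_eq_exp (q : ℤ) (y : ℝ) : EE q y = Complex.exp ((2*Real.pi*Complex.I*q) * y) := by
  unfold EE; ring_nf

lemma EE_hasDerivAt (q : ℤ) (hq : q ≠ 0) (y : ℝ) :
    HasDerivAt (fun t : ℝ => EE q t / (2*Real.pi*Complex.I*q)) (EE q y) y := by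
  have hfun : (fun t : ℝ => EE q t / (2*Real.pi*Complex.I*q))
      = fun t : ℝ => Complex.exp ((2*Real.pi*Complex.I*q) * t) / (2*Real.pi*Complex.I*q) := by
    funext t; rw [EE_eq_exp]
  rw [hfun, EE_eq_exp]
  set c : ℂ := 2*Real.pi*Complex.I*q with hc
  have hlin : HasDerivAt (fun t : ℝ => c * (t:ℂ)) c y := by
    simpa only [mul_one, id_eq] using ((hasDerivAt_id (y : ℂ)).const_mul c).comp_ofReal
  have hcne : c ≠ 0 := by
    simp [hc, Complex.ext_iff, Real.pi_ne_zero, hq, mul_ne_zero]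
  have h2 := (HasDerivAt.comp y (Complex.hasDerivAt_exp (c * y)) hlin).div_const c
  have h3 : Complex.exp (c * y) * c / c = Complex.exp (c * y) := mul_div_cancel_right₀ _ hcne
  simpa [Function.comp, h3] using h2

lemma ibp_bound (g g' : ℝ → ℝ) (q : ℤ) (hq : q ≠ 0) (M : ℝ)
    (hder : ∀ y, HasDerivAt g (g' y) y) (hg' : Continuous g')
    (hper : g 1 = g 0) (hM : ∀ y ∈ Set.Icc (0:ℝ) 1, |g' y| ≤ M) :
    ‖∫ y in (0:ℝ)..1, ((g y : ℝ) : ℂ) * EE (-q) y‖ ≤ M / (2*Real.pi*|(q:ℝ)|) := by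
  have hcne : (2*Real.pi*Complex.I*(-q : ℤ) : ℂ) ≠ 0 := by
    simp [Complex.ext_iff, Real.pi_ne_zero, hq, mul_ne_zero]
  have hcnorm : ‖(2*Real.pi*Complex.I*(-q : ℤ) : ℂ)‖ = 2*Real.pi*|(q:ℝ)| := by
    simp [norm_mul, abs_of_pos Real.pi_pos]
  set c : ℂ := 2*Real.pi*Complex.I*(-q : ℤ) with hc
  have key := intervalIntegral.integral_mul_deriv_eq_deriv_mul
    (u := fun y : ℝ => ((g y : ℝ) : ℂ)) (u' := fun y : ℝ => ((g' y : ℝ) : ℂ))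
    (v := fun y : ℝ => EE (-q) y / c) (v' := fun y : ℝ => EE (-q) y) (a := 0) (b := 1)
    (fun y _ => (hder y).ofReal_comp)
    (fun y _ => EE_hasDerivAt (-q) (by simpa using hq) y)
    ((Complex.continuous_ofReal.comp hg').intervalIntegrable _ _)
    ((EE_cont _).intervalIntegrable _ _)
  have hbdry : ((g 1 : ℝ) : ℂ) * (EE (-q) 1 / c) - ((g 0 : ℝ) : ℂ) * (EE (-q) 0 / c) = 0 := by
    rw [hper, show EE (-q) 1 = EE (-q) 0 by
      rw [show (1:ℝ) = ((1:ℤ):ℝ) by norm_num, show (0:ℝ) = ((0:ℤ):ℝ) by norm_num, EE_int, EE_int]]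
    ring
  rw [key, hbdry, zero_sub, norm_neg]
  have hbound : ∀ y ∈ Set.uIoc (0:ℝ) 1, ‖((g' y : ℝ) : ℂ) * (EE (-q) y / c)‖ ≤ M / (2*Real.pi*|(q:ℝ)|) := by
    intro y hy
    have hy' : y ∈ Set.Icc (0:ℝ) 1 := by
      rw [Set.uIoc_of_le zero_le_one] at hy; exact Set.Ioc_subset_Icc_self hy
    rw [norm_mul, norm_div, EE_norm, Complex.norm_real, Real.norm_eq_abs, hcnorm,
      div_eq_mul_one_div M]
    have h1 : (0:ℝ) ≤ 1/(2*Real.pi*|(q:ℝ)|) := by positivity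
    exact mul_le_mul_of_nonneg_right (hM y hy') h1
  calc ‖∫ y in (0:ℝ)..1, ((g' y : ℝ) : ℂ) * (EE (-q) y / c)‖
      ≤ (M / (2*Real.pi*|(q:ℝ)|)) * |1 - 0| := intervalIntegral.norm_integral_le_of_norm_le_const hbound
    _ = M / (2*Real.pi*|(q:ℝ)|) := by norm_num

lemma EE_zero (x : ℝ) : EE 0 x = 1 := by unfold EE; simp

lemma EE_neg_arg (k : ℤ) (t : ℝ) : EE k (-t) = EE (-k) t := by
  unfold EE; congr 1; push_cast; ring

lemma key (lam : ℝ) (G : ℝ × ℝ → ℝ) (hG : ContDiff ℝ (⊤ : ℕ∞) G)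
    (hper : ∀ (x y : ℝ) (m n : ℤ), G (x + m, y + n) = G (x, y))
    (s : Finset ℕ) (a : ℕ → ℝ)
    (heq : ∀ x y : ℝ, (∑ i ∈ s, a i * Real.cos (2*Real.pi*((i:ℝ)+1)*x)) = G (x + y, y + lam) - G (x, y)) :
    ∀ j ∈ s, a j = 0 := by
  intro j hj
  set P : ℤ := (j : ℤ) + 1 with hP
  have hPpos : 0 < P := by omega
  have contG : Continuous G := hG.continuous
  have hperx : ∀ x y : ℝ, G (x + 1, y) = G (x, y) := by
    intro x y; simpa using hper x y 1 0
  have hpery : ∀ x y : ℝ, G (x, y + 1) = G (x, y) := by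
    intro x y; simpa using hper x y 0 1
  -- inner Fourier transform in x
  set H : ℝ → ℂ := fun y => ∫ x in (0:ℝ)..1, ((G (x, y) : ℝ) : ℂ) * EE (-P) x with hH
  set c : ℤ → ℂ := fun q => ∫ y in (0:ℝ)..1, H y * EE (-q) y with hc
  have Hcont : Continuous H := by
    apply intervalIntegral.continuous_parametric_intervalIntegral_of_continuous'
    apply Continuous.mul
    · exact Complex.continuous_ofReal.comp (contG.comp (continuous_snd.prodMk continuous_fst))
    · exact (EE_cont _).comp continuous_snd
  have Hper : Function.Periodic H 1 := by
    intro y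
    simp only [hH]
    congr 1
    funext x
    rw [hpery]
  -- Step A : inner integral of the composed function
  have innerEq : ∀ y : ℝ,
      (∫ x in (0:ℝ)..1, ((G (x + y, y + lam) : ℝ) : ℂ) * EE (-P) x)
        = EE P y * H (y + lam) := by
    intro y
    have e1 : ∀ x : ℝ, ((G (x + y, y + lam) : ℝ) : ℂ) * EE (-P) x
        = ((fun u : ℝ => ((G (u, y + lam) : ℝ) : ℂ) * EE (-P) u) (x + y)) * EE P y := by
      intro x
      simp only
      rw [EE_add]
      have : EE (-P) y * EE P y = 1 := by rw [EE_mul]; simpa using EE_zero y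
      calc ((G (x + y, y + lam) : ℝ) : ℂ) * EE (-P) x
          = ((G (x + y, y + lam) : ℝ) : ℂ) * EE (-P) x * (EE (-P) y * EE P y) := by rw [this, mul_one]
        _ = ((G (x + y, y + lam) : ℝ) : ℂ) * (EE (-P) x * EE (-P) y) * EE P y := by ring
    simp only [e1]
    rw [intervalIntegral.integral_mul_const]
    have hperF : Function.Periodic (fun u : ℝ => ((G (u, y + lam) : ℝ) : ℂ) * EE (-P) u) 1 := by
      intro u
      simp only [hperx, EE_periodic (-P) u]
    rw [shift_integral _ hperF y]
    rw [mul_comm]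
  -- Step B : outer integral for the composed function
  have cobEq : ∀ q : ℤ,
      (∫ y in (0:ℝ)..1, (EE P y * H (y + lam)) * EE (-q) y)
        = EE (q - P) lam * c (q - P) := by
    intro q
    have e1 : ∀ y : ℝ, (EE P y * H (y + lam)) * EE (-q) y
        = ((fun t : ℝ => H t * EE (P - q) t) (y + lam)) * EE (P - q) (-lam) := by
      intro y
      simp only
      have h1 : EE P y * EE (-q) y = EE (P - q) y := by rw [EE_mul]; ring_nf
      have h2 : EE (P - q) ((y + lam) + (-lam)) = EE (P - q) (y + lam) * EE (P - q) (-lam) := EE_add _ _ _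
      have h3 : EE (P - q) y = EE (P - q) (y + lam) * EE (P - q) (-lam) := by
        rw [← h2]; ring_nf
      calc (EE P y * H (y + lam)) * EE (-q) y
          = H (y + lam) * (EE P y * EE (-q) y) := by ring
        _ = H (y + lam) * EE (P - q) y := by rw [h1]
        _ = H (y + lam) * (EE (P - q) (y + lam) * EE (P - q) (-lam)) := by rw [← h3]
        _ = (H (y + lam) * EE (P - q) (y + lam)) * EE (P - q) (-lam) := by ring
    simp only [e1]
    rw [intervalIntegral.integral_mul_const]
    have hperF : Function.Periodic (fun t : ℝ => H t * EE (P - q) t) 1 := by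
      intro t
      simp only [Hper t, EE_periodic (P - q) t]
    rw [shift_integral _ hperF lam]
    rw [EE_neg_arg]
    have : -(P - q) = q - P := by ring
    rw [this]
    have : (∫ t in (0:ℝ)..1, H t * EE (P - q) t) = c (q - P) := by
      simp only [hc]
      congr 1
      funext t
      congr 2
      ring
    rw [this, mul_comm]
  -- Step C : Fourier coefficients of the left-hand side
  have lhsEq : ∀ q : ℤ,
      (∫ y in (0:ℝ)..1,
        (∫ x in (0:ℝ)..1, (((∑ i ∈ s, a i * Real.cos (2*Real.pi*((i:ℝ)+1)*x)) : ℝ) : ℂ) * EE (-P) x)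
          * EE (-q) y)
        = ((a j : ℂ)/2) * (if q = 0 then 1 else 0) := by
    intro q
    have hinner : (∫ x in (0:ℝ)..1,
        (((∑ i ∈ s, a i * Real.cos (2*Real.pi*((i:ℝ)+1)*x)) : ℝ) : ℂ) * EE (-P) x) = (a j : ℂ)/2 := by
      have e1 : ∀ x : ℝ, (((∑ i ∈ s, a i * Real.cos (2*Real.pi*((i:ℝ)+1)*x)) : ℝ) : ℂ) * EE (-P) x
          = ∑ i ∈ s, (a i : ℂ) * (((Real.cos (2*Real.pi*((i:ℝ)+1)*x) : ℝ) : ℂ) * EE (-(j+1 : ℕ)) x) := by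
        intro x
        have : ((j+1 : ℕ) : ℤ) = P := by push_cast [hP]; ring
        rw [this]
        push_cast
        rw [Finset.sum_mul]
        congr 1
        funext i
        ring
      simp only [e1]
      rw [intervalIntegral.integral_finset_sum]
      · have e2 : ∀ i ∈ s, (∫ x in (0:ℝ)..1,
            (a i : ℂ) * (((Real.cos (2*Real.pi*((i:ℝ)+1)*x) : ℝ) : ℂ) * EE (-(j+1 : ℕ)) x))
            = (a i : ℂ) * (if i = j then 1/2 else 0) := by
          intro i _
          rw [intervalIntegral.integral_const_mul]
          congr 1
          have := cos_coeff i j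
          simpa using this
        rw [Finset.sum_congr rfl e2]
        rw [Finset.sum_eq_single j]
        · simp; ring
        · intro b _ hb; simp [hb]
        · intro h; exact absurd hj h
      · intro i _
        apply Continuous.intervalIntegrable
        apply Continuous.mul continuous_const
        exact (Complex.continuous_ofReal.comp (by fun_prop)).mul (EE_cont _)
    rw [hinner, intervalIntegral.integral_const_mul]
    by_cases hq : q = 0
    · subst hq; rw [neg_zero, EE_integral_zero]; simp
    · rw [EE_integral _ (by simpa using hq)]; simp [hq]
  -- Step D : the master relation
  have master : ∀ q : ℤ, ((a j : ℂ)/2) * (if q = 0 then 1 else 0)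
      = EE (q - P) lam * c (q - P) - c q := by
    intro q
    have pt : ∀ y : ℝ,
        (∫ x in (0:ℝ)..1, (((∑ i ∈ s, a i * Real.cos (2*Real.pi*((i:ℝ)+1)*x)) : ℝ) : ℂ) * EE (-P) x)
            * EE (-q) y
        = (EE P y * H (y + lam)) * EE (-q) y - H y * EE (-q) y := by
      intro y
      have int1 : IntervalIntegrable (fun x : ℝ => ((G (x + y, y + lam) : ℝ) : ℂ) * EE (-P) x)
          MeasureTheory.volume 0 1 := by
        apply Continuous.intervalIntegrable
        exact (Complex.continuous_ofReal.comp (contG.comp (by fun_prop))).mul (EE_cont _)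
      have int2 : IntervalIntegrable (fun x : ℝ => ((G (x, y) : ℝ) : ℂ) * EE (-P) x)
          MeasureTheory.volume 0 1 := by
        apply Continuous.intervalIntegrable
        exact (Complex.continuous_ofReal.comp (contG.comp (by fun_prop))).mul (EE_cont _)
      have hAB : (∫ x in (0:ℝ)..1,
            (((∑ i ∈ s, a i * Real.cos (2*Real.pi*((i:ℝ)+1)*x)) : ℝ) : ℂ) * EE (-P) x)
          = (∫ x in (0:ℝ)..1, ((G (x + y, y + lam) : ℝ) : ℂ) * EE (-P) x)
            - ∫ x in (0:ℝ)..1, ((G (x, y) : ℝ) : ℂ) * EE (-P) x := by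
        rw [← intervalIntegral.integral_sub int1 int2]
        congr 1
        funext x
        rw [heq x y]
        push_cast
        ring
      rw [hAB, innerEq y]
      have hHy : (∫ x in (0:ℝ)..1, ((G (x, y) : ℝ) : ℂ) * EE (-P) x) = H y := rfl
      rw [hHy]
      ring
    have ii1 : IntervalIntegrable (fun y : ℝ => (EE P y * H (y + lam)) * EE (-q) y)
        MeasureTheory.volume 0 1 := by
      apply Continuous.intervalIntegrable
      exact ((EE_cont _).mul (Hcont.comp (by fun_prop))).mul (EE_cont _)
    have ii2 : IntervalIntegrable (fun y : ℝ => H y * EE (-q) y) MeasureTheory.volume 0 1 := by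
      apply Continuous.intervalIntegrable
      exact Hcont.mul (EE_cont _)
    have step : (∫ y in (0:ℝ)..1,
          (∫ x in (0:ℝ)..1, (((∑ i ∈ s, a i * Real.cos (2*Real.pi*((i:ℝ)+1)*x)) : ℝ) : ℂ) * EE (-P) x)
            * EE (-q) y)
        = (∫ y in (0:ℝ)..1, (EE P y * H (y + lam)) * EE (-q) y)
          - ∫ y in (0:ℝ)..1, H y * EE (-q) y := by
      rw [← intervalIntegral.integral_sub ii1 ii2]
      congr 1
      funext y
      exact pt y
    rw [← lhsEq q, step, cobEq q]
  -- Step E : decay of the coefficients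
  obtain ⟨M, hM⟩ : ∃ M : ℝ, ∀ pt ∈ (Set.Icc (0:ℝ) 1) ×ˢ (Set.Icc (0:ℝ) 1),
      ‖fderiv ℝ G pt ((0:ℝ), (1:ℝ))‖ ≤ M := by
    have hfd : Continuous fun pt : ℝ × ℝ => fderiv ℝ G pt ((0:ℝ), (1:ℝ)) :=
      (ContinuousLinearMap.apply ℝ ℝ ((0:ℝ),(1:ℝ))).continuous.comp (hG.continuous_fderiv (by simp))
    exact (isCompact_Icc.prod isCompact_Icc).exists_bound_of_continuousOn hfd.continuousOn
  have hMnn : 0 ≤ M := by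
    refine le_trans (norm_nonneg _) (hM ((0:ℝ),(0:ℝ)) ?_)
    constructor <;> simp
  have decay : ∀ q : ℤ, q ≠ 0 → ‖c q‖ ≤ M / (2*Real.pi*|(q:ℝ)|) := by
    intro q hq
    have swap1 : c q = ∫ x in (0:ℝ)..1,
        EE (-P) x * ∫ y in (0:ℝ)..1, ((G (x, y) : ℝ) : ℂ) * EE (-q) y := by
      have e0 : c q = ∫ y in (0:ℝ)..1, ∫ x in (0:ℝ)..1,
          (((G (x, y) : ℝ) : ℂ) * EE (-P) x) * EE (-q) y := by
        simp only [hc, hH]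
        congr 1
        funext y
        rw [← intervalIntegral.integral_mul_const]
      rw [e0, swap_box _ (by fun_prop)]
      congr 1
      funext x
      rw [← intervalIntegral.integral_const_mul]
      congr 1
      funext y
      ring
    rw [swap1]
    have hbd : ∀ x ∈ Set.uIoc (0:ℝ) 1,
        ‖EE (-P) x * ∫ y in (0:ℝ)..1, ((G (x, y) : ℝ) : ℂ) * EE (-q) y‖
          ≤ M / (2*Real.pi*|(q:ℝ)|) := by
      intro x hx
      have hxI : x ∈ Set.Icc (0:ℝ) 1 := by
        rw [Set.uIoc_of_le zero_le_one] at hx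
        exact Set.Ioc_subset_Icc_self hx
      rw [norm_mul, EE_norm, one_mul]
      refine ibp_bound (fun y => G (x, y)) (fun y => fderiv ℝ G (x, y) ((0:ℝ),(1:ℝ))) q hq M
        ?_ ?_ ?_ ?_
      · intro y
        have h1 := (hG.differentiable (by simp) (x, y)).hasFDerivAt
        have h2 : HasDerivAt (fun t : ℝ => ((x, t) : ℝ × ℝ)) ((0:ℝ),(1:ℝ)) y :=
          (hasDerivAt_const y x).prodMk (hasDerivAt_id y)
        exact h1.comp_hasDerivAt y h2
      · exact ((ContinuousLinearMap.apply ℝ ℝ ((0:ℝ),(1:ℝ))).continuous.comp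
          (hG.continuous_fderiv (by simp))).comp (by fun_prop)
      · simpa using hpery x 0
      · intro y hy
        simpa [Real.norm_eq_abs] using hM (x, y) (Set.mk_mem_prod hxI hy)
    calc ‖∫ x in (0:ℝ)..1, EE (-P) x * ∫ y in (0:ℝ)..1, ((G (x, y) : ℝ) : ℂ) * EE (-q) y‖
        ≤ (M / (2*Real.pi*|(q:ℝ)|)) * |1 - 0| :=
          intervalIntegral.norm_integral_le_of_norm_le_const hbd
      _ = M / (2*Real.pi*|(q:ℝ)|) := by norm_num
  -- Step F : conclusion
  have normEq : ∀ m : ℤ, m ≠ 0 → ‖c (m * P)‖ = ‖c ((m - 1) * P)‖ := by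
    intro m hm
    have hmp : m * P ≠ 0 := mul_ne_zero hm (by omega)
    have h0 := master (m * P)
    rw [if_neg hmp, mul_zero] at h0
    have h1 : c (m * P) = EE (m * P - P) lam * c (m * P - P) := by
      exact (sub_eq_zero.mp h0.symm).symm
    rw [h1, show m * P - P = (m - 1) * P by ring, norm_mul, EE_norm, one_mul]
  have up : ∀ k : ℕ, ‖c ((k : ℤ) * P)‖ = ‖c 0‖ := by
    intro k
    induction k with
    | zero => simp
    | succ n ih =>
      have h := normEq ((n : ℤ) + 1) (by omega)
      rw [show ((n : ℤ) + 1) - 1 = (n : ℤ) by ring] at h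
      rw [show (((n + 1 : ℕ)) : ℤ) = (n : ℤ) + 1 by push_cast; ring, h, ih]
  have down : ∀ k : ℕ, ‖c ((-1 - (k : ℤ)) * P)‖ = ‖c (-P)‖ := by
    intro k
    induction k with
    | zero => simp
    | succ n ih =>
      have h := normEq (-1 - (n : ℤ)) (by omega)
      rw [show (-1 - (n : ℤ)) - 1 = -1 - ((n : ℤ) + 1) by ring] at h
      rw [show (((n + 1 : ℕ)) : ℤ) = (n : ℤ) + 1 by push_cast; ring, ← h, ih]
  have hP1 : (1:ℝ) ≤ (P : ℝ) := by exact_mod_cast hPpos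
  have genBound : ∀ r : ℝ, (∀ k : ℕ, ∃ q : ℤ, ‖c q‖ = r ∧ (k : ℝ) + 1 ≤ |(q : ℝ)|) → r = 0 := by
    intro r hr
    have hrnn : 0 ≤ r := by
      obtain ⟨q, hq1, _⟩ := hr 0
      rw [← hq1]; exact norm_nonneg _
    by_contra h
    have hpos : 0 < r := lt_of_le_of_ne hrnn (Ne.symm h)
    obtain ⟨k, hk⟩ := exists_nat_gt (M / (2*Real.pi*r))
    obtain ⟨q, hq1, hq2⟩ := hr k
    have hqne : q ≠ 0 := by
      intro hq0
      rw [hq0] at hq2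
      simp at hq2
      have : (0:ℝ) ≤ (k:ℝ) := Nat.cast_nonneg k
      linarith
    have hd := decay q hqne
    rw [hq1] at hd
    have habs : (0:ℝ) < |(q : ℝ)| := by
      have : (0:ℝ) ≤ (k:ℝ) := Nat.cast_nonneg k
      linarith
    have h2 : r * (2*Real.pi*|(q:ℝ)|) ≤ M := by
      rw [← le_div_iff₀ (by positivity)]
      exact hd
    have h3 : M < (k:ℝ) * (2*Real.pi*r) := by
      rw [div_lt_iff₀ (by positivity)] at hk
      linarith
    have h4 : (k:ℝ) * (2*Real.pi*r) ≤ r * (2*Real.pi*|(q:ℝ)|) := by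
      have hk1 : (k:ℝ) ≤ |(q:ℝ)| := by linarith
      nlinarith [Real.pi_pos]
    linarith
  have c0z : c 0 = 0 := by
    rw [← norm_eq_zero]
    apply genBound
    intro k
    refine ⟨((k:ℤ) + 1) * P, ?_, ?_⟩
    · rw [show ((k:ℤ) + 1) * P = (((k+1 : ℕ)):ℤ) * P by push_cast; ring, up]
    · have hcast : ((((k:ℤ) + 1) * P : ℤ) : ℝ) = ((k:ℝ) + 1) * (P:ℝ) := by push_cast; ring
      rw [hcast, _root_.abs_of_nonneg (by positivity : (0:ℝ) ≤ ((k:ℝ) + 1) * (P:ℝ))]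
      nlinarith
  have cPz : c (-P) = 0 := by
    rw [← norm_eq_zero]
    apply genBound
    intro k
    refine ⟨(-1 - (k:ℤ)) * P, ?_, ?_⟩
    · rw [down]
    · have hcast : (((-1 - (k:ℤ)) * P : ℤ) : ℝ) = (-1 - (k:ℝ)) * (P:ℝ) := by push_cast; ring
      rw [hcast, abs_mul, _root_.abs_of_nonpos (by linarith [Nat.cast_nonneg (α := ℝ) k] : (-1 - (k:ℝ)) ≤ 0),
        _root_.abs_of_nonneg (by linarith : (0:ℝ) ≤ (P:ℝ))]
      nlinarith
  have final := master 0
  rw [if_pos rfl, mul_one, show (0:ℤ) - P = -P by ring, c0z, cPz, mul_zero, sub_zero] at final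
  field_simp at final
  simpa using final

/-- The subspace of smooth `ℤ²`-periodic functions `ℝ² → ℝ` (as the span of the set of
such functions, which is already a linear subspace). -/
def smoothPeriodic2 : Submodule ℝ ((ℝ × ℝ) → ℝ) :=
  Submodule.span ℝ {f | ContDiff ℝ (⊤ : ℕ∞) f ∧
    ∀ (x y : ℝ) (m n : ℤ), f (x + m, y + n) = f (x, y)}

/-- The subspace of coboundaries `g ∘ F_λ - g` with `g` smooth `ℤ²`-periodic, where
`F_λ(x, y) = (x + y, y + λ)`. -/
def coboundaries2 (lam : ℝ) : Submodule ℝ ((ℝ × ℝ) → ℝ) :=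
  Submodule.span ℝ {h | ∃ g : (ℝ × ℝ) → ℝ, ContDiff ℝ (⊤ : ℕ∞) g ∧
    (∀ (x y : ℝ) (m n : ℤ), g (x + m, y + n) = g (x, y)) ∧
    h = (fun p => g (p.1 + p.2, p.2 + lam) - g p)}

def cobSub (lam : ℝ) : Submodule ℝ ((ℝ × ℝ) → ℝ) where
  carrier := {h | ∃ g : (ℝ × ℝ) → ℝ, ContDiff ℝ (⊤ : ℕ∞) g ∧
    (∀ (x y : ℝ) (m n : ℤ), g (x + m, y + n) = g (x, y)) ∧
    h = (fun p => g (p.1 + p.2, p.2 + lam) - g p)}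
  zero_mem' := ⟨0, contDiff_const, fun _ _ _ _ => rfl, by funext p; simp⟩
  add_mem' := by
    rintro f₁ f₂ ⟨g₁, hg₁, hp₁, rfl⟩ ⟨g₂, hg₂, hp₂, rfl⟩
    refine ⟨g₁ + g₂, hg₁.add hg₂, fun x y m n => by simp [hp₁ x y m n, hp₂ x y m n], ?_⟩
    funext p
    simp only [Pi.add_apply]
    ring
  smul_mem' := by
    rintro r f ⟨g, hg, hp, rfl⟩
    refine ⟨r • g, hg.const_smul r, fun x y m n => by simp [hp x y m n], ?_⟩
    funext p
    simp only [Pi.smul_apply, smul_eq_mul]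
    ring

lemma coboundaries2_eq (lam : ℝ) : coboundaries2 lam = cobSub lam :=
  Submodule.span_eq (cobSub lam)

noncomputable def fcos (j : ℕ) : (ℝ × ℝ) → ℝ := fun p => Real.cos (2 * Real.pi * ((j:ℝ) + 1) * p.1)

lemma fcos_mem (j : ℕ) : fcos j ∈ smoothPeriodic2 := by
  apply Submodule.subset_span
  constructor
  · exact Real.contDiff_cos.comp ((contDiff_const.mul contDiff_fst))
  · intro x y m n
    unfold fcos
    simp only
    have h : 2 * Real.pi * ((j:ℝ) + 1) * (x + (m:ℝ))
        = 2 * Real.pi * ((j:ℝ) + 1) * x + ((((j:ℤ)+1) * m : ℤ) : ℝ) * (2 * Real.pi) := by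
      push_cast; ring
    rw [h, Real.cos_add_int_mul_two_pi]

/-- The first leafwise cohomology of the suspension flow of `F_λ(x,y) = (x+y, y+λ)` is
infinite dimensional: the quotient of the space of smooth `ℤ²`-periodic functions by the
space of coboundaries `g ∘ F_λ - g` is not finite dimensional. -/
theorem katok_example_infinite_dimensional_cohomology (lam : ℝ) :
    ¬ FiniteDimensional ℝ
      (smoothPeriodic2 ⧸ (coboundaries2 lam).comap smoothPeriodic2.subtype) := by
  intro hfin
  set K := (coboundaries2 lam).comap smoothPeriodic2.subtype with hK
  set v : ℕ → smoothPeriodic2 := fun j => ⟨fcos j, fcos_mem j⟩ with hv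
  have hindep : LinearIndependent ℝ (fun j : ℕ => K.mkQ (v j)) := by
    rw [linearIndependent_iff']
    intro s g hsum j hj
    have hmem : (∑ i ∈ s, g i • v i) ∈ K := by
      rw [← Submodule.Quotient.mk_eq_zero, ← Submodule.mkQ_apply, map_sum]
      simpa [_root_.map_smul] using hsum
    rw [hK, Submodule.mem_comap, coboundaries2_eq] at hmem
    have hval : (smoothPeriodic2.subtype (∑ i ∈ s, g i • v i)) = ∑ i ∈ s, g i • fcos i := by
      rw [map_sum]
      congr 1
    rw [hval] at hmem
    obtain ⟨G, hG, hper, hfun⟩ := hmem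
    have heq : ∀ x y : ℝ, (∑ i ∈ s, g i * Real.cos (2*Real.pi*((i:ℝ)+1)*x))
        = G (x + y, y + lam) - G (x, y) := by
      intro x y
      have := congrFun hfun (x, y)
      simpa [Finset.sum_apply, fcos] using this
    exact key lam G hG hper s g heq j hj
  set n := Module.finrank ℝ (smoothPeriodic2 ⧸ K) with hn
  have hfin2 : LinearIndependent ℝ (fun i : Fin (n+1) => K.mkQ (v (i : ℕ))) :=
    hindep.comp (fun i : Fin (n+1) => (i : ℕ)) Fin.val_injective
  have := hfin2.fintype_card_le_finrank
  simp [Fintype.card_fin] at this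
  exact absurd this (by rw [← hn]; exact lt_irrefl n)
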